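/- arXiv:1903.04345 — 2 statements merged into one kernel-verified Lean document; each statement's English description precedes it below -/
import Mathlib

section
/- Let N ≥ 7, let u_ε(x) = (ε/(ε² + |x|²))^{(N-2)/2}, and let φ_ε = φ·u_ε where φ is a smooth cutoff equal to 1 on B_R(0) and supported in B_{2R}(0) ⊂ Ω. Then there exist μ with 1 + N/(N-4) < μ < N/2 + 1 and a constant C > 0 independent of ε such that ∫_Ω φ_ε (-Δ)⁻¹ φ_ε dx > C ε^μ for all sufficiently small ε > 0. -/
open MeasureTheory Metric Set Bornology

/-- The (pointwise, classical) Laplacian of a function on `ℝ^N`. -/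
noncomputable def lap {N : ℕ} (u : EuclideanSpace ℝ (Fin N) → ℝ)
    (x : EuclideanSpace ℝ (Fin N)) : ℝ :=
  ∑ i : Fin N, fderiv ℝ (fun y => fderiv ℝ u y (EuclideanSpace.single i 1)) x
    (EuclideanSpace.single i 1)

namespace Stmt5Aux

open Filter

variable {N : ℕ}

noncomputable def Dq (x : EuclideanSpace ℝ (Fin N)) :
    EuclideanSpace ℝ (Fin N) →L[ℝ] ℝ :=
  ∑ i : Fin N, (2 * x i) • EuclideanSpace.proj (𝕜 := ℝ) i

theorem normsq_eq (x : EuclideanSpace ℝ (Fin N)) : ‖x‖^2 = ∑ i, (x i)^2 := by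
  rw [EuclideanSpace.norm_eq, Real.sq_sqrt (by positivity)]
  simp [Real.norm_eq_abs, sq_abs]

theorem hasFDerivAt_normsq (x : EuclideanSpace ℝ (Fin N)) :
    HasFDerivAt (fun y : EuclideanSpace ℝ (Fin N) => ‖y‖^2) (Dq x) x := by
  have h : (fun y : EuclideanSpace ℝ (Fin N) => ‖y‖^2) = fun y => ∑ i, (y i)^2 := by
    funext y; exact normsq_eq y
  rw [h, Dq]
  apply HasFDerivAt.fun_sum
  intro i _
  have h1 : HasFDerivAt (fun y : EuclideanSpace ℝ (Fin N) => y i)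
      (EuclideanSpace.proj (𝕜 := ℝ) i) x := (EuclideanSpace.proj (𝕜 := ℝ) i).hasFDerivAt
  have h2 : (fun y : EuclideanSpace ℝ (Fin N) => (y i)^2) = fun y => y i * y i := by
    funext y; ring
  rw [h2]
  refine (h1.mul h1).congr_fderiv ?_
  ext y
  simp [two_mul, add_smul]
  try ring

theorem Dq_single (x : EuclideanSpace ℝ (Fin N)) (j : Fin N) :
    Dq x (EuclideanSpace.single j (1:ℝ)) = 2 * x j := by
  simp [Dq, ContinuousLinearMap.sum_apply, EuclideanSpace.single_apply]

theorem lap_comp_normsq {F F' F'' : ℝ → ℝ}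
    (hF : ∀ s : ℝ, 0 ≤ s → HasDerivAt F (F' s) s)
    (hF' : ∀ s : ℝ, 0 ≤ s → HasDerivAt F' (F'' s) s)
    (x : EuclideanSpace ℝ (Fin N)) :
    lap (fun y => F (‖y‖^2)) x
      = 2*N*(F' (‖x‖^2)) + 4*‖x‖^2*(F'' (‖x‖^2)) := by
  have key : ∀ y : EuclideanSpace ℝ (Fin N),
      fderiv ℝ (fun z : EuclideanSpace ℝ (Fin N) => F (‖z‖^2)) y
        = F' (‖y‖^2) • Dq y := by
    intro y
    exact ((hF _ (by positivity)).comp_hasFDerivAt y (hasFDerivAt_normsq y)).fderiv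
  have inner_eq : ∀ i : Fin N,
      (fun y : EuclideanSpace ℝ (Fin N) =>
        fderiv ℝ (fun z : EuclideanSpace ℝ (Fin N) => F (‖z‖^2)) y
          (EuclideanSpace.single i 1))
      = fun y => F' (‖y‖^2) * (2 * y i) := by
    intro i; funext y
    rw [key y]
    simp [Dq_single]
  have hi : ∀ i : Fin N,
      HasFDerivAt (fun y : EuclideanSpace ℝ (Fin N) => F' (‖y‖^2) * (2 * y i))
        (F' (‖x‖^2) • (2:ℝ) • EuclideanSpace.proj (𝕜 := ℝ) i
          + (2 * x i) • F'' (‖x‖^2) • Dq x) x := by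
    intro i
    have hA : HasFDerivAt (fun y : EuclideanSpace ℝ (Fin N) => F' (‖y‖^2))
        (F'' (‖x‖^2) • Dq x) x :=
      (hF' _ (by positivity)).comp_hasFDerivAt x (hasFDerivAt_normsq x)
    have hB : HasFDerivAt (fun y : EuclideanSpace ℝ (Fin N) => 2 * y i)
        ((2:ℝ) • (EuclideanSpace.proj (𝕜 := ℝ) i)) x :=
      (EuclideanSpace.proj (𝕜 := ℝ) i).hasFDerivAt.const_mul 2
    exact hA.mul hB
  have term_eq : ∀ i : Fin N,
      fderiv ℝ (fun y : EuclideanSpace ℝ (Fin N) =>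
        fderiv ℝ (fun z : EuclideanSpace ℝ (Fin N) => F (‖z‖^2)) y
          (EuclideanSpace.single i 1)) x (EuclideanSpace.single i 1)
      = 2 * F' (‖x‖^2) + F'' (‖x‖^2) * (2 * x i) * (2 * x i) := by
    intro i
    rw [inner_eq i, (hi i).fderiv]
    simp [Dq_single, EuclideanSpace.single_apply]
    ring
  unfold lap
  rw [Finset.sum_congr rfl (fun i _ => term_eq i), Finset.sum_add_distrib]
  have h2 : ∑ i : Fin N, F'' (‖x‖^2) * (2 * x i) * (2 * x i)
      = 4 * ‖x‖^2 * F'' (‖x‖^2) := by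
    have h3 : ∀ i : Fin N, F'' (‖x‖^2) * (2 * x i) * (2 * x i)
        = (x i ^ 2) * (4 * F'' (‖x‖^2)) := fun i => by ring
    rw [Finset.sum_congr rfl fun i _ => h3 i, ← Finset.sum_mul, ← normsq_eq]
    ring
  simp only [Finset.sum_const, Finset.card_univ, Fintype.card_fin, nsmul_eq_mul]
  rw [h2]; ring

theorem sdt1d {g : ℝ → ℝ} {c : ℝ}
    (hg : ∀ᶠ t in nhds (0:ℝ), DifferentiableAt ℝ g t)
    (hmin : IsLocalMin g 0) (hc : HasDerivAt (deriv g) c 0) : 0 ≤ c := by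
  by_contra hneg
  push_neg at hneg
  have h0 : deriv g 0 = 0 := hmin.deriv_eq_zero
  rw [hasDerivAt_iff_tendsto_slope] at hc
  have hs : ∀ᶠ t in nhdsWithin (0:ℝ) {(0:ℝ)}ᶜ, slope (deriv g) 0 t < 0 :=
    hc.eventually_lt_const hneg
  have hs' : ∀ᶠ t in nhdsWithin (0:ℝ) (Ioi 0), deriv g t < 0 := by
    have := hs.filter_mono (nhdsWithin_mono 0 (fun t (ht : t ∈ Ioi 0) => ne_of_gt ht))
    filter_upwards [this, self_mem_nhdsWithin] with t ht (ht' : t ∈ Ioi 0)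
    rw [slope_def_field, h0] at ht
    simp at ht
    rcases div_neg_iff.1 ht with ⟨h1, h2⟩ | ⟨h1, h2⟩
    · linarith [ht'.out]
    · exact h1
  have hrest : ∀ᶠ t in nhdsWithin (0:ℝ) (Ioi 0), DifferentiableAt ℝ g t ∧ g 0 ≤ g t :=
    (hg.and hmin).filter_mono nhdsWithin_le_nhds
  obtain ⟨u, hu, hsub⟩ := mem_nhdsGT_iff_exists_Ioo_subset.1 (hs'.and hrest)
  have hu0 : (0:ℝ) < u := hu
  set t := u/2 with ht
  have htu : t ∈ Ioo (0:ℝ) u := ⟨by positivity, by linarith⟩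
  have hcont : ContinuousOn g (Icc 0 t) := by
    intro s hs
    rcases eq_or_lt_of_le hs.1 with h | h
    · rw [← h]; exact (hg.self_of_nhds).continuousAt.continuousWithinAt
    · exact ((hsub ⟨h, lt_of_le_of_lt hs.2 htu.2⟩).2.1).continuousAt.continuousWithinAt
  have hdiff : DifferentiableOn ℝ g (Ioo 0 t) := fun s hs =>
    ((hsub ⟨hs.1, lt_trans hs.2 htu.2⟩).2.1).differentiableWithinAt
  obtain ⟨ξ, hξ, hξeq⟩ := exists_deriv_eq_slope g (by positivity : (0:ℝ) < t) hcont hdiff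
  have h1 : deriv g ξ < 0 := (hsub ⟨hξ.1, lt_trans hξ.2 htu.2⟩).1
  have h2 : g 0 ≤ g t := (hsub htu).2.2
  rw [hξeq] at h1
  have hd : (0:ℝ) ≤ (g t - g 0) / (t - 0) :=
    div_nonneg (by linarith) (by simp; positivity)
  linarith

theorem second_dir_nonneg {E : Type*} [NormedAddCommGroup E] [NormedSpace ℝ E]
    {f : E → ℝ} {x : E} (hf : ContDiffAt ℝ 2 f x)
    (hmin : IsLocalMin f x) (e : E) :
    0 ≤ fderiv ℝ (fun y => fderiv ℝ f y e) x e := by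
  set ℓ : ℝ → E := fun t => x + t • e with hℓdef
  have hℓ : ∀ t : ℝ, HasDerivAt ℓ e t := by
    intro t
    exact (((hasDerivAt_id t).smul_const e).const_add x).congr_deriv (one_smul ℝ e)
  have hℓ0 : ℓ 0 = x := by simp [hℓdef]
  have hℓc : ContinuousAt ℓ 0 := (hℓ 0).continuousAt
  have hℓt : Tendsto ℓ (nhds 0) (nhds x) := by
    rw [← hℓ0] at *; exact hℓc
  have hev : ∀ᶠ y in nhds x, DifferentiableAt ℝ f y := by
    filter_upwards [hf.eventually (by norm_num)] with y hy
    exact hy.differentiableAt (by norm_num)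
  have hevℓ : ∀ᶠ t in nhds (0:ℝ), DifferentiableAt ℝ f (ℓ t) := hℓt.eventually hev
  set g : ℝ → ℝ := fun t => f (ℓ t) with hgdef
  have hgd : ∀ᶠ t in nhds (0:ℝ), DifferentiableAt ℝ g t := by
    filter_upwards [hevℓ] with t ht
    exact ht.comp t (hℓ t).differentiableAt
  have hgmin : IsLocalMin g 0 := by
    have := hmin
    rw [← hℓ0] at this
    exact IsMinFilter.comp_tendsto this hℓc
  set A : E → ℝ := fun y => fderiv ℝ f y e with hA
  have hAd : DifferentiableAt ℝ A x := by
    have h1 : ContDiffAt ℝ 1 (fderiv ℝ f) x := hf.fderiv_right (by norm_num)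
    exact (h1.clm_apply contDiffAt_const).differentiableAt one_ne_zero
  have hderiv_g : ∀ᶠ t in nhds (0:ℝ), deriv g t = A (ℓ t) := by
    filter_upwards [hevℓ] with t ht
    exact (ht.hasFDerivAt.comp_hasDerivAt t (hℓ t)).deriv
  have hAc : HasDerivAt (fun t => A (ℓ t)) (fderiv ℝ A x e) 0 := by
    have h2 : HasFDerivAt A (fderiv ℝ A x) (ℓ 0) := by rw [hℓ0]; exact hAd.hasFDerivAt
    exact h2.comp_hasDerivAt 0 (hℓ 0)
  have hc : HasDerivAt (deriv g) (fderiv ℝ A x e) 0 :=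
    hAc.congr_of_eventuallyEq hderiv_g
  exact sdt1d hgd hgmin hc

theorem lap_sub_on {f g : EuclideanSpace ℝ (Fin N) → ℝ}
    {Ω : Set (EuclideanSpace ℝ (Fin N))} (hΩ : IsOpen Ω)
    (hf : ContDiffOn ℝ 2 f Ω) (hg : ContDiff ℝ 2 g)
    {x : EuclideanSpace ℝ (Fin N)} (hx : x ∈ Ω) :
    lap (fun y => f y - g y) x = lap f x - lap g x := by
  unfold lap
  rw [← Finset.sum_sub_distrib]
  apply Finset.sum_congr rfl
  intro i _
  set e := EuclideanSpace.single i (1:ℝ) with he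
  have hgd : ∀ y, DifferentiableAt ℝ g y := fun y =>
    (hg.differentiable (by norm_num)).differentiableAt
  have h1 : (fun y => fderiv ℝ (fun z => f z - g z) y e)
      =ᶠ[nhds x] (fun y => fderiv ℝ f y e - fderiv ℝ g y e) := by
    filter_upwards [hΩ.mem_nhds hx] with y hy
    have hfd : DifferentiableAt ℝ f y :=
      (hf.contDiffAt (hΩ.mem_nhds hy)).differentiableAt (by norm_num)
    rw [fderiv_fun_sub hfd (hgd y)]
    rfl
  rw [h1.fderiv_eq]
  have hfA : DifferentiableAt ℝ (fun y => fderiv ℝ f y e) x := by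
    have := (hf.contDiffAt (hΩ.mem_nhds hx)).fderiv_right (m := 1) (by norm_num)
    exact (this.clm_apply contDiffAt_const).differentiableAt one_ne_zero
  have hgA : DifferentiableAt ℝ (fun y => fderiv ℝ g y e) x := by
    have := (hg.contDiffAt (x := x)).fderiv_right (m := 1) (by norm_num)
    exact (this.clm_apply contDiffAt_const).differentiableAt one_ne_zero
  rw [fderiv_fun_sub hfA hgA]
  rfl

theorem weak_max {Ω : Set (EuclideanSpace ℝ (Fin N))}
    (hΩo : IsOpen Ω) (hΩb : IsBounded Ω) (hne : Ω.Nonempty)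
    (f G : EuclideanSpace ℝ (Fin N) → ℝ)
    (hf2 : ContDiffOn ℝ 2 f Ω) (hfc : ContinuousOn f (closure Ω))
    (hG : ContDiff ℝ 2 G)
    (hstrict : ∀ x ∈ Ω, lap f x < lap G x)
    (hbd : ∀ x ∈ frontier Ω, 0 ≤ f x - G x) :
    ∀ x ∈ closure Ω, 0 ≤ f x - G x := by
  set z := fun y => f y - G y with hz
  have hzc : ContinuousOn z (closure Ω) := hfc.sub hG.continuous.continuousOn
  have hcpt : IsCompact (closure Ω) := hΩb.isCompact_closure
  obtain ⟨x₀, hx₀mem, hx₀min⟩ :=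
    hcpt.exists_isMinOn (hne.mono subset_closure) hzc
  have key : 0 ≤ z x₀ := by
    by_cases hin : x₀ ∈ Ω
    · exfalso
      have hloc : IsLocalMin z x₀ :=
        hx₀min.isLocalMin (mem_of_superset (hΩo.mem_nhds hin) subset_closure)
      have hz2 : ContDiffAt ℝ 2 z x₀ :=
        (hf2.contDiffAt (hΩo.mem_nhds hin)).sub hG.contDiffAt
      have hlapz : 0 ≤ lap z x₀ := by
        unfold lap
        apply Finset.sum_nonneg
        intro i _
        exact second_dir_nonneg hz2 hloc _
      rw [lap_sub_on hΩo hf2 hG hin] at hlapz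
      exact absurd (hstrict x₀ hin) (by linarith)
    · exact hbd x₀ ⟨hx₀mem, by rwa [hΩo.interior_eq]⟩
  intro x hx
  exact le_trans key (hx₀min hx)

theorem hasDerivAt_invpow {c : ℝ} (n : ℕ) {s : ℝ} (h : 0 < c + s) :
    HasDerivAt (fun t : ℝ => ((c+t)^n)⁻¹) (-(n:ℝ) * ((c+s)^(n+1))⁻¹) s := by
  have h1 : HasDerivAt (fun t : ℝ => c + t) 1 s := (hasDerivAt_id s).const_add c
  have h2 : HasDerivAt (fun u : ℝ => u ^ (-(n:ℤ))) (((-(n:ℤ)) : ℝ) * (c+s)^(-(n:ℤ)-1)) (c+s) := by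
    exact_mod_cast hasDerivAt_zpow (-(n:ℤ)) (c+s) (Or.inl h.ne')
  have h3 := h2.comp s h1
  have e1 : ((fun u : ℝ => u ^ (-(n:ℤ))) ∘ (fun t : ℝ => c + t)) = fun t : ℝ => ((c+t)^n)⁻¹ := by
    funext t
    simp [zpow_neg, zpow_natCast]
  have e2 : ((-(n:ℤ)) : ℝ) * (c+s)^(-(n:ℤ)-1) * 1 = -(n:ℝ) * ((c+s)^(n+1))⁻¹ := by
    have : (-(n:ℤ)-1 : ℤ) = -((n+1 : ℕ) : ℤ) := by push_cast; ring
    rw [this, zpow_neg, zpow_natCast]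
    push_cast
    ring
  rw [e1, e2] at h3
  exact h3

end Stmt5Aux

open Stmt5Aux in
set_option maxHeartbeats 1000000 in
/-- Let `N ≥ 7`, `u_ε(x) = (ε/(ε²+|x|²))^{(N-2)/2}` the Aubin–Talenti bubbles,
and `φ_ε = φ u_ε` with `φ` a smooth cutoff equal to `1` on `B_R(0)` and
supported in `B_{2R}(0) ⊆ Ω`.  If `v ε = (-Δ)⁻¹ φ_ε` (Dirichlet inverse
Laplacian on `Ω`), then there are `μ ∈ (1 + N/(N-4), N/2 + 1)` and `C > 0`
independent of `ε` with `∫_Ω φ_ε (-Δ)⁻¹ φ_ε > C ε^μ` for all small `ε > 0`. -/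
theorem stmt5 {N : ℕ} (hN : 7 ≤ N)
    (Ω : Set (EuclideanSpace ℝ (Fin N))) (hΩo : IsOpen Ω) (hΩb : IsBounded Ω)
    (R : ℝ) (hR : 0 < R)
    (hRΩ : closedBall (0 : EuclideanSpace ℝ (Fin N)) (2 * R) ⊆ Ω)
    (φ : EuclideanSpace ℝ (Fin N) → ℝ) (hφsm : ContDiff ℝ (⊤ : ℕ∞) φ)
    (hφ1 : ∀ x ∈ ball (0 : EuclideanSpace ℝ (Fin N)) R, φ x = 1)
    (hφsupp : ∀ x ∉ ball (0 : EuclideanSpace ℝ (Fin N)) (2 * R), φ x = 0)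
    (hφrange : ∀ x, 0 ≤ φ x ∧ φ x ≤ 1)
    (v : ℝ → EuclideanSpace ℝ (Fin N) → ℝ)
    (hvsm : ∀ ε > (0 : ℝ), ContDiffOn ℝ 2 (v ε) Ω)
    (hvcont : ∀ ε > (0 : ℝ), ContinuousOn (v ε) (closure Ω))
    (hveq : ∀ ε > (0 : ℝ), ∀ x ∈ Ω,
      -lap (v ε) x = φ x * (ε / (ε ^ 2 + ‖x‖ ^ 2)) ^ (((N : ℝ) - 2) / 2))
    (hvbd : ∀ ε > (0 : ℝ), ∀ x ∈ frontier Ω, v ε x = 0) :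
    ∃ μ : ℝ, 1 + (N : ℝ) / ((N : ℝ) - 4) < μ ∧ μ < (N : ℝ) / 2 + 1 ∧
      ∃ C > (0 : ℝ), ∃ ε₀ > (0 : ℝ), ∀ ε, 0 < ε → ε < ε₀ →
        C * ε ^ μ <
          ∫ x in Ω, (φ x * (ε / (ε ^ 2 + ‖x‖ ^ 2)) ^ (((N : ℝ) - 2) / 2)) * v ε x := by
  classical
  have hNR : (7:ℝ) ≤ (N:ℝ) := by exact_mod_cast hN
  have hNpos : (0:ℝ) < (N:ℝ) := by linarith
  refine ⟨4, ?_, ?_, ?_⟩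
  · have h1 : (N:ℝ)/((N:ℝ)-4) < 3 := by
      rw [div_lt_iff₀ (by linarith)]
      linarith
    linarith
  · linarith
  set p : ℝ := ((N:ℝ)-2)/2 with hpdef
  have hp : 0 ≤ p := by rw [hpdef]; linarith
  set κ : ℝ := (volume (ball (0:EuclideanSpace ℝ (Fin N)) 1)).toReal with hκdef
  have hκ : 0 < κ := by
    rw [hκdef]
    refine ENNReal.toReal_pos (ne_of_gt (measure_ball_pos _ _ one_pos)) measure_ball_lt_top.ne
  obtain ⟨ρ, hρpos, hρsub⟩ := hΩb.subset_closedBall_lt 0 0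
  set M : ℝ := ρ^2 with hMdef
  have hM0 : 0 ≤ M := by positivity
  set VΩ : ℝ := (volume Ω).toReal with hVdef
  have hV0 : 0 ≤ VΩ := ENNReal.toReal_nonneg
  have hVfin : volume Ω ≠ ⊤ :=
    (lt_of_le_of_lt (measure_mono hρsub) measure_closedBall_lt_top).ne
  set g0 : ℝ := ((((2*R)^2)^N)⁻¹ : ℝ) with hg0def
  have hg0 : 0 < g0 := by rw [hg0def]; positivity
  set C1 : ℝ := κ / ((2:ℝ)^p * 2^(N+2) * (N:ℝ)^2) with hC1def
  have hC1 : 0 < C1 := by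
    rw [hC1def]
    apply div_pos hκ
    have h2p : (0:ℝ) < (2:ℝ)^p := Real.rpow_pos_of_pos two_pos p
    positivity
  set C2 : ℝ := VΩ * g0 * (((R^2):ℝ)^p)⁻¹ / (2*(N:ℝ)^2) with hC2def
  have hC2 : 0 ≤ C2 := by
    rw [hC2def]
    have hrp : (0:ℝ) < ((R^2):ℝ)^p := Real.rpow_pos_of_pos (by positivity) p
    positivity
  refine ⟨C1/2, by positivity, min (R/2) (min 1 (C1/(2*(C2+1)))), ?_, ?_⟩
  · have : (0:ℝ) < C1/(2*(C2+1)) := by positivity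
    simp only [lt_min_iff]
    exact ⟨by positivity, by norm_num, this⟩
  intro ε hε hεlt
  have hεR2 : ε < R/2 := lt_of_lt_of_le hεlt (min_le_left _ _)
  have hεR : ε < R := by linarith
  have hε1 : ε < 1 := lt_of_lt_of_le hεlt ((min_le_right _ _).trans (min_le_left _ _))
  have hεC : ε < C1/(2*(C2+1)) :=
    lt_of_lt_of_le hεlt ((min_le_right _ _).trans (min_le_right _ _))
  set ea : ℝ := (3*(N:ℝ)+6)/2 with headef
  set a : ℝ := ε^ea/(2*(N:ℝ)^2) with hadef
  have ha : 0 < a := by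
    rw [hadef]
    exact div_pos (Real.rpow_pos_of_pos hε ea) (by positivity)
  have hcq : ∀ x : EuclideanSpace ℝ (Fin N), 0 < ε^2 + ‖x‖^2 := fun x => by positivity
  -- the barrier function
  set w : EuclideanSpace ℝ (Fin N) → ℝ :=
    fun x => a * (((ε^2+‖x‖^2)^N)⁻¹ - g0) with hwdef
  -- u is the bubble
  have hu_nonneg : ∀ x : EuclideanSpace ℝ (Fin N),
      0 ≤ (ε / (ε ^ 2 + ‖x‖ ^ 2)) ^ p := fun x =>
    Real.rpow_nonneg (by positivity) p
  -- `lw` is the Laplacian of `w`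
  set lw : EuclideanSpace ℝ (Fin N) → ℝ := fun x =>
    2*(N:ℝ)*(a*(-(N:ℝ))*(((ε^2+‖x‖^2))^(N+1))⁻¹)
      + 4*‖x‖^2*(a*(-(N:ℝ))*(-((N:ℝ)+1))*(((ε^2+‖x‖^2))^(N+2))⁻¹) with hlwdef
  have hlw_fact : ∀ x : EuclideanSpace ℝ (Fin N),
      -(lw x) = 2*a*(N:ℝ)*(((ε^2+‖x‖^2))^(N+2))⁻¹
        * ((N:ℝ)*ε^2 - ((N:ℝ)+2)*‖x‖^2) := by
    intro x
    have hcs := hcq x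
    have hne : (ε^2+‖x‖^2) ≠ 0 := hcs.ne'
    have h1 : ((ε^2+‖x‖^2)^(N+1))⁻¹ = (ε^2+‖x‖^2) * ((ε^2+‖x‖^2)^(N+2))⁻¹ := by
      rw [pow_succ (ε^2+‖x‖^2) (N+1), mul_inv]
      field_simp
    simp only [hlwdef]
    rw [h1]
    ring
  have barrier : ∀ x : EuclideanSpace ℝ (Fin N),
      -(lw x) ≤ φ x * (ε / (ε ^ 2 + ‖x‖ ^ 2)) ^ p := by
    intro x
    have hcs := hcq x
    have hφu : 0 ≤ φ x * (ε / (ε ^ 2 + ‖x‖ ^ 2)) ^ p :=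
      mul_nonneg (hφrange x).1 (hu_nonneg x)
    rw [hlw_fact x]
    rcases le_or_gt ((N:ℝ)*ε^2 - ((N:ℝ)+2)*‖x‖^2) 0 with hcase | hcase
    · exact le_trans (mul_nonpos_of_nonneg_of_nonpos (by positivity) hcase) hφu
    · -- here ‖x‖ < ε < R, so φ x = 1
      have hslt : ‖x‖^2 < ε^2 := by nlinarith
      have hxε : ‖x‖ < ε := by
        by_contra hcon
        push_neg at hcon
        have : ε^2 ≤ ‖x‖^2 := pow_le_pow_left₀ hε.le hcon 2
        linarith
      have hφx : φ x = 1 := hφ1 x (mem_ball_zero_iff.2 (lt_trans hxε hεR))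
      rw [hφx, one_mul]
      -- reduce to a power comparison
      have hupos : (0:ℝ) < ε / (ε^2 + ‖x‖^2) := by positivity
      have hcs_rpow : ∀ z : ℝ, (0:ℝ) < (ε^2+‖x‖^2) ^ (z:ℝ) :=
        fun z => Real.rpow_pos_of_pos hcs z
      have hueq : (ε / (ε ^ 2 + ‖x‖ ^ 2)) ^ p
          = ε^p * ((ε^2+‖x‖^2) ^ (p:ℝ))⁻¹ := by
        rw [Real.div_rpow hε.le hcs.le, div_eq_mul_inv]
      have hnat : ((ε^2+‖x‖^2) : ℝ)^(N+2) = (ε^2+‖x‖^2) ^ (((N:ℝ)+2) : ℝ) := by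
        rw [show ((N:ℝ)+2) = ((N+2 : ℕ) : ℝ) by push_cast; ring, Real.rpow_natCast]
      have hstep1 : 2*a*(N:ℝ)*(((ε^2+‖x‖^2))^(N+2))⁻¹
            * ((N:ℝ)*ε^2 - ((N:ℝ)+2)*‖x‖^2)
          ≤ 2*a*(N:ℝ)^2*ε^2*(((ε^2+‖x‖^2))^(N+2))⁻¹ := by
        have h2 : (N:ℝ)*ε^2 - ((N:ℝ)+2)*‖x‖^2 ≤ (N:ℝ)*ε^2 :=
          sub_le_self _ (mul_nonneg (by linarith) (sq_nonneg _))
        have h3 : (0:ℝ) ≤ 2*a*(N:ℝ)*(((ε^2+‖x‖^2))^(N+2))⁻¹ :=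
          mul_nonneg (mul_nonneg (mul_nonneg two_pos.le ha.le) hNpos.le)
            (inv_nonneg.2 (pow_nonneg (hcq x).le _))
        calc 2*a*(N:ℝ)*(((ε^2+‖x‖^2))^(N+2))⁻¹ * ((N:ℝ)*ε^2 - ((N:ℝ)+2)*‖x‖^2)
            ≤ 2*a*(N:ℝ)*(((ε^2+‖x‖^2))^(N+2))⁻¹ * ((N:ℝ)*ε^2) :=
              mul_le_mul_of_nonneg_left h2 h3
          _ = 2*a*(N:ℝ)^2*ε^2*(((ε^2+‖x‖^2))^(N+2))⁻¹ := by ring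
      refine le_trans hstep1 ?_
      -- key exponent inequality
      have hkey : 2*a*(N:ℝ)^2*ε^2 ≤ ε^p * (ε^2+‖x‖^2) ^ (((N:ℝ)+2-p) : ℝ) := by
        have hb1 : (ε^2 : ℝ) ≤ ε^2+‖x‖^2 := le_add_of_nonneg_right (sq_nonneg _)
        have hexp : (0:ℝ) ≤ (N:ℝ)+2-p := by rw [hpdef]; linarith
        have h5 : ((ε^2 : ℝ)) ^ (((N:ℝ)+2-p) : ℝ) ≤ (ε^2+‖x‖^2) ^ (((N:ℝ)+2-p) : ℝ) :=
          Real.rpow_le_rpow (by positivity) hb1 hexp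
        have h6 : ((ε^2 : ℝ)) ^ (((N:ℝ)+2-p) : ℝ) = ε ^ ((2*((N:ℝ)+2-p)) : ℝ) := by
          rw [show (ε^2 : ℝ) = ε ^ ((2:ℕ) : ℝ) by rw [Real.rpow_natCast],
            ← Real.rpow_mul hε.le]
          norm_num
        have h7 : 2*a*(N:ℝ)^2*ε^2 = ε ^ ((ea + 2) : ℝ) := by
          rw [hadef]
          have hN2 : ((N:ℝ)^2) ≠ 0 := by positivity
          rw [Real.rpow_add hε]
          rw [show ε ^ ((2:ℝ)) = ε^(2:ℕ) by rw [← Real.rpow_natCast ε 2]; norm_num]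
          field_simp
        have h8 : ε ^ ((ea + 2) : ℝ) = ε ^ ((p + 2*((N:ℝ)+2-p)) : ℝ) := by
          congr 1
          rw [headef, hpdef]
          ring
        calc 2*a*(N:ℝ)^2*ε^2 = ε ^ ((p + 2*((N:ℝ)+2-p)) : ℝ) := by rw [h7, h8]
          _ = ε ^ p * ε ^ ((2*((N:ℝ)+2-p)) : ℝ) := Real.rpow_add hε _ _
          _ ≤ ε ^ p * (ε^2+‖x‖^2) ^ (((N:ℝ)+2-p) : ℝ) := by
              apply mul_le_mul_of_nonneg_left _ (Real.rpow_nonneg hε.le p)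
              rw [← h6]; exact h5
      calc 2*a*(N:ℝ)^2*ε^2*(((ε^2+‖x‖^2))^(N+2))⁻¹
          ≤ (ε^p * (ε^2+‖x‖^2) ^ (((N:ℝ)+2-p) : ℝ)) * (((ε^2+‖x‖^2))^(N+2))⁻¹ :=
            mul_le_mul_of_nonneg_right hkey (by positivity)
        _ = (ε / (ε ^ 2 + ‖x‖ ^ 2)) ^ p := by
            rw [hueq, hnat, ← Real.rpow_neg hcs.le, mul_assoc, ← Real.rpow_add hcs,
              ← Real.rpow_neg hcs.le]
            congr 2
            ring
  have maxpr : ∀ x ∈ Ω, w x ≤ v ε x := by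
    have hΩne : Ω.Nonempty := ⟨0, hRΩ (Metric.mem_closedBall_self (by positivity))⟩
    have key : ∀ δ > (0:ℝ), ∀ x ∈ Ω,
        w x ≤ v ε x + (δ*M - δ*‖x‖^2) := by
      intro δ hδ x hx
      set b : ℝ := -(a*g0) - δ*M with hbdef
      set G : EuclideanSpace ℝ (Fin N) → ℝ :=
        fun y => a*((ε^2+‖y‖^2)^N)⁻¹ + (δ*‖y‖^2 + b) with hGdef
      have hns : ContDiff ℝ 2 (fun y : EuclideanSpace ℝ (Fin N) => ‖y‖^2) :=
        contDiff_norm_sq (𝕜 := ℝ)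
      have hGc2 : ContDiff ℝ 2 G := by
        have h1 : ContDiff ℝ 2 (fun y : EuclideanSpace ℝ (Fin N) => (ε^2+‖y‖^2)^N) :=
          (contDiff_const.add hns).pow N
        have h2 : ContDiff ℝ 2 (fun y : EuclideanSpace ℝ (Fin N) => ((ε^2+‖y‖^2)^N)⁻¹) :=
          h1.inv (fun y => (pow_pos (hcq y) N).ne')
        exact (contDiff_const.mul h2).add ((contDiff_const.mul hns).add contDiff_const)
      have hFd : ∀ s : ℝ, 0 ≤ s →
          HasDerivAt (fun t => a*((ε^2+t)^N)⁻¹ + (δ*t + b))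
            (a*(-(N:ℝ))*((ε^2+s)^(N+1))⁻¹ + δ) s := by
        intro s hs
        have h1 := (hasDerivAt_invpow (c := ε^2) N (show 0 < ε^2+s by positivity)).const_mul a
        have h2 : HasDerivAt (fun t : ℝ => δ*t + b) δ s := by
          simpa using ((hasDerivAt_id s).const_mul δ).add_const b
        have h3 := h1.add h2
        refine h3.congr_deriv ?_
        ring
      have hFd' : ∀ s : ℝ, 0 ≤ s →
          HasDerivAt (fun t => a*(-(N:ℝ))*((ε^2+t)^(N+1))⁻¹ + δ)
            (a*(-(N:ℝ))*(-((N:ℝ)+1))*((ε^2+s)^(N+2))⁻¹) s := by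
        intro s hs
        have h1 := ((hasDerivAt_invpow (c := ε^2) (N+1)
          (show 0 < ε^2+s by positivity)).const_mul (a*(-(N:ℝ)))).add_const δ
        refine h1.congr_deriv ?_
        push_cast
        ring
      have hlapG : ∀ y : EuclideanSpace ℝ (Fin N),
          lap G y = 2*(N:ℝ)*(a*(-(N:ℝ))*((ε^2+‖y‖^2)^(N+1))⁻¹ + δ)
            + 4*‖y‖^2*(a*(-(N:ℝ))*(-((N:ℝ)+1))*((ε^2+‖y‖^2)^(N+2))⁻¹) := by
        intro y
        exact lap_comp_normsq hFd hFd' y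
      have hstrict : ∀ y ∈ Ω, lap (v ε) y < lap G y := by
        intro y hy
        have h1 : -lap (v ε) y = φ y * (ε/(ε^2+‖y‖^2))^p := hveq ε hε y hy
        have h2 := barrier y
        have h3 : lap G y = lw y + 2*(N:ℝ)*δ := by
          rw [hlapG y]; simp only [hlwdef]; ring
        rw [h3]
        have h4 : 0 < 2*(N:ℝ)*δ := by positivity
        have h5 : lap (v ε) y = -(φ y * (ε/(ε^2+‖y‖^2))^p) := by linarith
        rw [h5]
        linarith
      have hbd : ∀ y ∈ frontier Ω, 0 ≤ v ε y - G y := by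
        intro y hy
        have hyc : y ∈ closure Ω := frontier_subset_closure hy
        obtain ⟨_, hyni⟩ := hy
        rw [hΩo.interior_eq] at hyni
        have hv0 : v ε y = 0 := hvbd ε hε y ⟨hyc, by rwa [hΩo.interior_eq]⟩
        have hynorm : 2*R < ‖y‖ := by
          by_contra hcon
          push_neg at hcon
          exact hyni (hRΩ (mem_closedBall_zero_iff.2 hcon))
        have hq1 : (2*R)^2 < ‖y‖^2 := by
          have := pow_lt_pow_left₀ hynorm (by positivity : (0:ℝ) ≤ 2*R) (n := 2) (by norm_num)
          exact this
        have hgy : ((ε^2+‖y‖^2)^N)⁻¹ ≤ g0 := by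
          rw [hg0def]
          apply inv_anti₀ (by positivity)
          exact pow_le_pow_left₀ (by positivity) (by nlinarith [sq_nonneg ε]) N
        have hyM : ‖y‖^2 ≤ M := by
          have h5 : y ∈ closedBall (0:EuclideanSpace ℝ (Fin N)) ρ :=
            closure_minimal hρsub Metric.isClosed_closedBall hyc
          have h6 := mem_closedBall_zero_iff.1 h5
          rw [hMdef]
          exact pow_le_pow_left₀ (norm_nonneg y) h6 2
        have hGy : G y ≤ 0 := by
          simp only [hGdef, hbdef]
          have h7 : a*((ε^2+‖y‖^2)^N)⁻¹ ≤ a*g0 := mul_le_mul_of_nonneg_left hgy ha.le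
          have h8 : δ*‖y‖^2 ≤ δ*M := mul_le_mul_of_nonneg_left hyM hδ.le
          linarith
        linarith
      have conc := weak_max hΩo hΩb hΩne (v ε) G (hvsm ε hε) (hvcont ε hε) hGc2 hstrict hbd
      have h9 := conc x (subset_closure hx)
      have hw : w x = a*((ε^2+‖x‖^2)^N)⁻¹ - a*g0 := by simp only [hwdef]; ring
      simp only [hGdef, hbdef] at h9
      rw [hw]
      linarith
    intro x hx
    by_contra hcon
    push_neg at hcon
    have hqM : ‖x‖^2 ≤ M := by
      have h5 := mem_closedBall_zero_iff.1 (hρsub hx)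
      rw [hMdef]
      exact pow_le_pow_left₀ (norm_nonneg x) h5 2
    set η : ℝ := (w x - v ε x)/2 with hηdef
    have hη : 0 < η := by rw [hηdef]; linarith
    have hδpos : 0 < η/(M+1) := by positivity
    have hk := key (η/(M+1)) hδpos x hx
    have h2 : (η/(M+1))*M - (η/(M+1))*‖x‖^2 = (η/(M+1))*(M - ‖x‖^2) := by ring
    have h3 : (η/(M+1))*(M - ‖x‖^2) ≤ (η/(M+1))*(M+1) :=
      mul_le_mul_of_nonneg_left (by nlinarith [sq_nonneg ‖x‖]) hδpos.le
    have h4 : (η/(M+1))*(M+1) = η := div_mul_cancel₀ η (by positivity)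
    rw [h2] at hk
    rw [hηdef] at *
    linarith
  have intbound : C1/2 * ε^(4:ℝ) <
      ∫ x in Ω, (φ x * (ε / (ε ^ 2 + ‖x‖ ^ 2)) ^ p) * v ε x := by
    have hu_cont : Continuous (fun x : EuclideanSpace ℝ (Fin N) =>
        (ε / (ε ^ 2 + ‖x‖ ^ 2)) ^ p) := by
      apply Continuous.rpow_const
      · exact continuous_const.div (continuous_const.add (continuous_norm.pow 2))
          (fun x => (hcq x).ne')
      · exact fun x => Or.inr hp
    have hw_cont : Continuous w := by
      rw [hwdef]
      apply continuous_const.mul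
      apply Continuous.sub _ continuous_const
      exact Continuous.inv₀ ((continuous_const.add (continuous_norm.pow 2)).pow N)
        (fun x => (pow_pos (hcq x) N).ne')
    have hφu_cont : Continuous (fun x => φ x * (ε / (ε ^ 2 + ‖x‖ ^ 2)) ^ p) :=
      hφsm.continuous.mul hu_cont
    have hccl : IsCompact (closure Ω) := hΩb.isCompact_closure
    have hint1 : IntegrableOn
        (fun x => (φ x * (ε / (ε ^ 2 + ‖x‖ ^ 2)) ^ p) * v ε x) Ω := by
      apply IntegrableOn.mono_set _ subset_closure
      exact (hφu_cont.continuousOn.mul (hvcont ε hε)).integrableOn_compact hccl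
    have hint2 : IntegrableOn
        (fun x => (φ x * (ε / (ε ^ 2 + ‖x‖ ^ 2)) ^ p) * w x) Ω := by
      apply IntegrableOn.mono_set _ subset_closure
      exact (hφu_cont.mul hw_cont).continuousOn.integrableOn_compact hccl
    have hmono : ∫ x in Ω, (φ x * (ε / (ε ^ 2 + ‖x‖ ^ 2)) ^ p) * w x
        ≤ ∫ x in Ω, (φ x * (ε / (ε ^ 2 + ‖x‖ ^ 2)) ^ p) * v ε x := by
      apply setIntegral_mono_on hint2 hint1 hΩo.measurableSet
      intro x hx
      exact mul_le_mul_of_nonneg_left (maxpr x hx)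
        (mul_nonneg (hφrange x).1 (hu_nonneg x))
    have hball : ball (0:EuclideanSpace ℝ (Fin N)) ε ⊆ Ω := fun y hy => hRΩ
      (mem_closedBall_zero_iff.2 (by
        have := mem_ball_zero_iff.1 hy
        linarith))
    have hcup : ball (0:EuclideanSpace ℝ (Fin N)) ε ∪ (Ω \ ball 0 ε) = Ω :=
      union_diff_cancel hball
    have hsplit : ∫ x in Ω, (φ x * (ε / (ε ^ 2 + ‖x‖ ^ 2)) ^ p) * w x
        = (∫ x in ball (0:EuclideanSpace ℝ (Fin N)) ε,
            (φ x * (ε / (ε ^ 2 + ‖x‖ ^ 2)) ^ p) * w x)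
          + ∫ x in Ω \ ball (0:EuclideanSpace ℝ (Fin N)) ε,
            (φ x * (ε / (ε ^ 2 + ‖x‖ ^ 2)) ^ p) * w x := by
      conv_lhs => rw [← hcup]
      rw [setIntegral_union disjoint_sdiff_right
        (hΩo.measurableSet.diff measurableSet_ball)
        (hint2.mono_set hball) (hint2.mono_set diff_subset)]
    set lo : ℝ := ((2*ε)⁻¹)^p * (a * ((2*ε^2)^N)⁻¹ / 2) with hlodef
    have hptwise_ball : ∀ x ∈ ball (0:EuclideanSpace ℝ (Fin N)) ε,
        lo ≤ (φ x * (ε / (ε ^ 2 + ‖x‖ ^ 2)) ^ p) * w x := by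
      intro x hx
      have hxε : ‖x‖ < ε := mem_ball_zero_iff.1 hx
      have hφx : φ x = 1 := hφ1 x (mem_ball_zero_iff.2 (by linarith))
      have hq : ‖x‖^2 < ε^2 := pow_lt_pow_left₀ hxε (norm_nonneg x) (by norm_num)
      have hcs2 : ε^2+‖x‖^2 ≤ 2*ε^2 := by linarith only [hq]
      have hub : ((2*ε)⁻¹) ^ p ≤ (ε / (ε ^ 2 + ‖x‖ ^ 2)) ^ p := by
        apply Real.rpow_le_rpow (by positivity) _ hp
        rw [inv_eq_one_div, div_le_div_iff₀ (by positivity) (hcq x)]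
        linarith only [hcs2]
      have hwb : a * ((2*ε^2)^N)⁻¹ / 2 ≤ w x := by
        have h1 : ((2*ε^2)^N)⁻¹ ≤ ((ε^2+‖x‖^2)^N)⁻¹ :=
          inv_anti₀ (pow_pos (hcq x) N) (pow_le_pow_left₀ (hcq x).le hcs2 N)
        have h2 : g0 ≤ ((2*ε^2)^N)⁻¹ / 2 := by
          have h3 : (2*ε^2 : ℝ) ≤ R^2/2 := by
            have h3' : ε^2 ≤ (R/2)^2 := pow_le_pow_left₀ hε.le hεR2.le 2
            have h3'' : ((R/2):ℝ)^2 = R^2/4 := by ring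
            linarith only [h3', h3'']
          have h4 : (2*ε^2:ℝ)^N ≤ (R^2/2)^N := pow_le_pow_left₀ (by positivity) h3 N
          have h5 : (2:ℝ) ≤ 8^N := by
            calc (2:ℝ) ≤ 8^1 := by norm_num
              _ ≤ 8^N := pow_le_pow_right₀ (by norm_num) (by omega)
          have h6 : (((2*R)^2)^N : ℝ) = 8^N * (R^2/2)^N := by
            rw [show ((2*R)^2 : ℝ) = 8 * (R^2/2) by ring, mul_pow]
          have h7 : 2*(2*ε^2)^N ≤ ((2*R)^2 : ℝ)^N := by
            rw [h6]
            exact mul_le_mul h5 h4 (by positivity) (by positivity)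
          rw [hg0def, show (((2*ε^2:ℝ))^N)⁻¹/2 = (2*(2*ε^2)^N)⁻¹ by
            rw [div_eq_mul_inv, ← mul_inv, mul_comm]]
          exact inv_anti₀ (by positivity) h7
        have h9 : ((2*ε^2)^N)⁻¹/2 ≤ ((ε^2+‖x‖^2)^N)⁻¹ - g0 := by linarith only [h1, h2]
        calc a * ((2*ε^2)^N)⁻¹ / 2 = a * (((2*ε^2)^N)⁻¹/2) := by ring
          _ ≤ a * (((ε^2+‖x‖^2)^N)⁻¹ - g0) := mul_le_mul_of_nonneg_left h9 ha.le
          _ = w x := by simp only [hwdef]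
      rw [hφx, one_mul]
      exact mul_le_mul hub hwb (by positivity) (hu_nonneg x)
    have hblow := setIntegral_ge_of_const_le (μ := volume) measurableSet_ball
      measure_ball_lt_top.ne hptwise_ball (hint2.mono_set hball)
    have hvol : (volume (ball (0:EuclideanSpace ℝ (Fin N)) ε)).toReal = ε^N * κ := by
      rw [Measure.addHaar_ball_of_pos volume (0:EuclideanSpace ℝ (Fin N)) hε,
        ENNReal.toReal_mul, ENNReal.toReal_ofReal (by positivity),
        finrank_euclideanSpace_fin, hκdef]
    set m2 : ℝ := a * g0 * (ε/R^2)^p with hm2def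
    have hm2 : 0 ≤ m2 := by
      rw [hm2def]
      have h0' : (0:ℝ) ≤ (ε/R^2)^p := Real.rpow_nonneg (by positivity) p
      exact mul_nonneg (mul_nonneg ha.le hg0.le) h0'
    have hptwise_off : ∀ x ∈ Ω \ ball (0:EuclideanSpace ℝ (Fin N)) ε,
        -m2 ≤ (φ x * (ε / (ε ^ 2 + ‖x‖ ^ 2)) ^ p) * w x := by
      intro x hx
      have hφu_nn : 0 ≤ φ x * (ε / (ε ^ 2 + ‖x‖ ^ 2)) ^ p :=
        mul_nonneg (hφrange x).1 (hu_nonneg x)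
      rcases lt_or_ge ‖x‖ R with hcase | hcase
      · have h1 : ε^2+‖x‖^2 ≤ (2*R)^2 := by
          have hxR : ‖x‖^2 ≤ R^2 := pow_le_pow_left₀ (norm_nonneg x) hcase.le 2
          have hε2 : ε^2 ≤ R^2 := pow_le_pow_left₀ hε.le hεR.le 2
          have he : ((2*R):ℝ)^2 = 4*R^2 := by ring
          linarith only [hxR, hε2, he, sq_nonneg R]
        have h2 : 0 ≤ w x := by
          simp only [hwdef]
          apply mul_nonneg ha.le
          rw [hg0def, sub_nonneg]
          exact inv_anti₀ (pow_pos (hcq x) N) (pow_le_pow_left₀ (hcq x).le h1 N)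
        have h3 : (0:ℝ) ≤ (φ x * (ε / (ε ^ 2 + ‖x‖ ^ 2)) ^ p) * w x :=
          mul_nonneg hφu_nn h2
        linarith only [h3, hm2]
      · have hqR : R^2 ≤ ‖x‖^2 := pow_le_pow_left₀ hR.le hcase 2
        have hu_up : (ε / (ε ^ 2 + ‖x‖ ^ 2)) ^ p ≤ (ε/R^2)^p := by
          apply Real.rpow_le_rpow (by positivity) _ hp
          rw [div_le_div_iff₀ (hcq x) (by positivity)]
          have h4' : R^2 ≤ ε^2+‖x‖^2 := by linarith only [hqR, sq_nonneg ε]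
          exact mul_le_mul_of_nonneg_left h4' hε.le
        have hw_lb : -(a*g0) ≤ w x := by
          simp only [hwdef]
          have h4 : 0 ≤ ((ε^2+‖x‖^2)^N)⁻¹ := by positivity
          rw [mul_sub]
          have h5 := mul_nonneg ha.le h4
          linarith only [h5]
        have h5 : -((φ x * (ε / (ε ^ 2 + ‖x‖ ^ 2)) ^ p) * (a*g0))
            ≤ (φ x * (ε / (ε ^ 2 + ‖x‖ ^ 2)) ^ p) * w x := by
          have := mul_le_mul_of_nonneg_left hw_lb hφu_nn
          rwa [mul_neg] at this
        have hφu_up : φ x * (ε / (ε ^ 2 + ‖x‖ ^ 2)) ^ p ≤ (ε/R^2)^p := by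
          calc φ x * (ε / (ε ^ 2 + ‖x‖ ^ 2)) ^ p
              ≤ 1 * (ε / (ε ^ 2 + ‖x‖ ^ 2)) ^ p :=
                mul_le_mul_of_nonneg_right (hφrange x).2 (hu_nonneg x)
            _ = (ε / (ε ^ 2 + ‖x‖ ^ 2)) ^ p := one_mul _
            _ ≤ (ε/R^2)^p := hu_up
        have h6 : (φ x * (ε / (ε ^ 2 + ‖x‖ ^ 2)) ^ p) * (a*g0) ≤ (ε/R^2)^p * (a*g0) :=
          mul_le_mul_of_nonneg_right hφu_up (by positivity)
        have h7 : (ε/R^2)^p * (a*g0) = m2 := by rw [hm2def]; ring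
        linarith only [h5, h6, h7]
    have hvolfin : volume (Ω \ ball (0:EuclideanSpace ℝ (Fin N)) ε) ≠ ⊤ :=
      (lt_of_le_of_lt (measure_mono (diff_subset.trans hρsub))
        measure_closedBall_lt_top).ne
    have hofflow := setIntegral_ge_of_const_le (μ := volume)
      (hΩo.measurableSet.diff measurableSet_ball) hvolfin hptwise_off
      (hint2.mono_set diff_subset)
    have hvol2 : (volume (Ω \ ball (0:EuclideanSpace ℝ (Fin N)) ε)).toReal ≤ VΩ := by
      rw [hVdef]
      exact ENNReal.toReal_mono hVfin (measure_mono diff_subset)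
    have hoff2 : -(m2 * VΩ) ≤ ∫ x in Ω \ ball (0:EuclideanSpace ℝ (Fin N)) ε,
        (φ x * (ε / (ε ^ 2 + ‖x‖ ^ 2)) ^ p) * w x := by
      refine le_trans ?_ hofflow
      have hmm := mul_le_mul_of_nonneg_left hvol2 hm2
      have he : volume.real (Ω \ ball (0:EuclideanSpace ℝ (Fin N)) ε) • -m2
          = -(m2 * (volume (Ω \ ball (0:EuclideanSpace ℝ (Fin N)) ε)).toReal) := by
          rw [smul_eq_mul, measureReal_def]; ring
      rw [he]
      linarith only [hmm]
    -- power computations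
    have hT1 : lo * (ε^N * κ) = C1 * ε^(4:ℝ) := by
      have e1 : ((2*ε)⁻¹:ℝ)^p = (2:ℝ)^(-p) * ε^(-p) := by
        rw [Real.inv_rpow (by positivity), ← Real.rpow_neg (by positivity),
          Real.mul_rpow two_pos.le hε.le]
      have e2 : (((2*ε^2:ℝ))^N)⁻¹ = ((2:ℝ)^N)⁻¹ * ε^(-(2*(N:ℝ))) := by
        rw [mul_pow, mul_inv, ← pow_mul]
        congr 1
        rw [← Real.rpow_natCast ε (2*N), ← Real.rpow_neg hε.le]
        congr 1
        push_cast
        ring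
      calc lo * (ε^N * κ)
          = ((2:ℝ)^(-p) * ((2:ℝ)^N)⁻¹/(4*(N:ℝ)^2) * κ) *
            (ε^(-p) * (ε^ea * (ε^(-(2*(N:ℝ))) * ε^((N:ℝ))))) := by
            rw [hlodef, hadef, e1, e2, ← Real.rpow_natCast ε N]
            ring
        _ = ((2:ℝ)^(-p) * ((2:ℝ)^N)⁻¹/(4*(N:ℝ)^2) * κ) * ε^(4:ℝ) := by
            rw [← Real.rpow_add hε, ← Real.rpow_add hε, ← Real.rpow_add hε]
            congr 1
            rw [hpdef, headef]
            push_cast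
            ring
        _ = C1 * ε^(4:ℝ) := by
            rw [hC1def, Real.rpow_neg two_pos.le, pow_add]
            have h2p : ((2:ℝ)^p) ≠ 0 := (Real.rpow_pos_of_pos two_pos p).ne'
            have hN0 : ((N:ℝ)^2) ≠ 0 := by positivity
            field_simp
            ring
    have hT2 : m2 * VΩ = C2 * ε^(2*(N:ℝ)+2) := by
      have e3 : ((ε/R^2:ℝ))^p = ε^p * (((R^2:ℝ))^p)⁻¹ := by
        rw [Real.div_rpow hε.le (by positivity), div_eq_mul_inv]
      calc m2 * VΩ = (g0 * (((R^2:ℝ))^p)⁻¹/(2*(N:ℝ)^2) * VΩ) * (ε^ea * ε^p) := by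
            rw [hm2def, hadef, e3]
            ring
        _ = (g0 * (((R^2:ℝ))^p)⁻¹/(2*(N:ℝ)^2) * VΩ) * ε^(2*(N:ℝ)+2) := by
            rw [← Real.rpow_add hε]
            congr 1
            rw [headef, hpdef]
            ring
        _ = C2 * ε^(2*(N:ℝ)+2) := by
            rw [hC2def]
            ring
    have hfinal : C2 * ε^(2*(N:ℝ)+2) < C1/2 * ε^(4:ℝ) := by
      have hsp : ε^(2*(N:ℝ)+2) = ε^(4:ℝ) * ε^(2*(N:ℝ)-2) := by
        rw [← Real.rpow_add hε]
        congr 1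
        ring
      have hle : ε^(2*(N:ℝ)-2) ≤ ε := by
        have h1 : ε^(2*(N:ℝ)-2) ≤ ε^(1:ℝ) :=
          Real.rpow_le_rpow_of_exponent_ge hε hε1.le (by linarith only [hNR])
        rwa [Real.rpow_one] at h1
      have h4pos : 0 < ε^(4:ℝ) := Real.rpow_pos_of_pos hε _
      have step1 : C2 * ε^(2*(N:ℝ)+2) ≤ C2 * (ε^(4:ℝ) * ε) := by
        rw [hsp]
        exact mul_le_mul_of_nonneg_left (mul_le_mul_of_nonneg_left hle h4pos.le) hC2
      have step2 : C2 * (ε^(4:ℝ) * ε) < (C2+1) * (ε^(4:ℝ) * (C1/(2*(C2+1)))) := by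
        have hA : C2 * (ε^(4:ℝ)*ε) ≤ C2 * (ε^(4:ℝ)*(C1/(2*(C2+1)))) :=
          mul_le_mul_of_nonneg_left (mul_le_mul_of_nonneg_left hεC.le h4pos.le) hC2
        have hB : C2 * (ε^(4:ℝ)*(C1/(2*(C2+1)))) < (C2+1) * (ε^(4:ℝ)*(C1/(2*(C2+1)))) := by
          apply mul_lt_mul_of_pos_right (lt_add_one C2)
          exact mul_pos h4pos (div_pos hC1 (by linarith only [hC2]))
        linarith only [hA, hB]
      have hC2' : (C2+1) ≠ 0 := by positivity
      have step3 : (C2+1) * (ε^(4:ℝ) * (C1/(2*(C2+1)))) = C1/2 * ε^(4:ℝ) := by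
        field_simp
      linarith only [step1, step2, step3]
    rw [smul_eq_mul, measureReal_def, hvol, mul_comm _ lo] at hblow
    rw [hT1] at hblow
    rw [hT2] at hoff2
    linarith only [hmono, hsplit, hblow, hoff2, hfinal]
  exact intbound
end

section
/- Let N = 6, u_ε(x) = (ε/(ε² + |x|²))², and φ_ε = φ·u_ε with φ a cutoff equal to 1 on B_R(0), supported in B_{2R}(0) ⊂ Ω ⊂ ℝ⁶. Then there is C > 0 independent of ε such that ∫_Ω φ_ε (-Δ)⁻¹ φ_ε dx > C ε⁴ for small ε > 0. -/
open MeasureTheory Metric Set Bornology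

open Filter Topology

abbrev E6 := EuclideanSpace ℝ (Fin 6)

lemma secderiv_nonneg {g : ℝ → ℝ} {a : ℝ}
    (hmin : IsLocalMin g 0) (hdiff : ∀ᶠ t in 𝓝 (0:ℝ), DifferentiableAt ℝ g t)
    (h2 : HasDerivAt (deriv g) a 0) : 0 ≤ a := by
  by_contra hneg
  push_neg at hneg
  have h0 : deriv g 0 = 0 := hmin.deriv_eq_zero
  -- slope of deriv g tends to a < 0, so deriv g t < 0 for small t > 0
  have hs := h2.isLittleO
  have hslope : Tendsto (fun t => deriv g t / t) (𝓝[≠] (0:ℝ)) (𝓝 a) := by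
    have := hasDerivAt_iff_tendsto_slope.mp h2
    simpa [slope_fun_def_field, h0] using this
  have hev : ∀ᶠ t in 𝓝[>] (0:ℝ), deriv g t < 0 := by
    have h1 : ∀ᶠ t in 𝓝[≠] (0:ℝ), deriv g t / t < a / 2 := by
      apply hslope.eventually_lt_const
      linarith
    have h2' : ∀ᶠ t in 𝓝[>] (0:ℝ), deriv g t / t < a / 2 :=
      nhdsWithin_le_of_mem (by
        filter_upwards [self_mem_nhdsWithin] with t ht
        exact Set.mem_setOf.mpr (ne_of_gt ht)) h1
    filter_upwards [h2', self_mem_nhdsWithin] with t ht htpos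
    rw [Set.mem_Ioi] at htpos
    have : deriv g t < a / 2 * t := (div_lt_iff₀ htpos).mp ht
    nlinarith
  obtain ⟨u, hu, huP⟩ := mem_nhdsGT_iff_exists_Ioo_subset.mp hev
  obtain ⟨d1, hd1, hdiff'⟩ := Metric.eventually_nhds_iff.mp hdiff
  obtain ⟨d2, hd2, hmin'⟩ := Metric.eventually_nhds_iff.mp (show ∀ᶠ x in 𝓝 (0:ℝ), g 0 ≤ g x from hmin)
  rw [Set.mem_Ioi] at hu
  set t := min (min u d1) d2 / 2 with htdef
  have ht0 : 0 < t := by positivity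
  have htu : t < u := by
    have : min (min u d1) d2 ≤ u := le_trans (min_le_left _ _) (min_le_left _ _)
    linarith
  have htd1 : t < d1 := by
    have : min (min u d1) d2 ≤ d1 := le_trans (min_le_left _ _) (min_le_right _ _)
    linarith
  have htd2 : t < d2 := by
    have : min (min u d1) d2 ≤ d2 := min_le_right _ _
    linarith
  have hanti : StrictAntiOn g (Set.Icc 0 t) := by
    apply strictAntiOn_of_deriv_neg (convex_Icc 0 t)
    · intro x hx
      have : DifferentiableAt ℝ g x := by
        apply hdiff'
        rcases hx with ⟨hx1, hx2⟩
        rw [Real.dist_eq, sub_zero, abs_of_nonneg hx1]; linarith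
      exact this.continuousAt.continuousWithinAt
    · intro x hx
      rw [interior_Icc] at hx
      exact huP ⟨hx.1, lt_trans hx.2 htu⟩
  have hlt : g t < g 0 := hanti (Set.left_mem_Icc.mpr ht0.le) (Set.right_mem_Icc.mpr ht0.le) ht0
  have : g 0 ≤ g t := by
    apply hmin'
    rw [Real.dist_eq, sub_zero, abs_of_nonneg ht0.le]; exact htd2
  linarith


lemma lap_nonneg_at_min {w : E6 → ℝ} {s : Set E6} (hso : IsOpen s) {x₀ : E6}
    (hx₀ : x₀ ∈ s) (hw : ContDiffOn ℝ 2 w s) (hmin : ∀ y ∈ s, w x₀ ≤ w y) :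
    0 ≤ lap w x₀ := by
  have hwd : ∀ y ∈ s, DifferentiableAt ℝ w y := fun y hy =>
    ((hw.differentiableOn (by norm_num)) y hy).differentiableAt (hso.mem_nhds hy)
  apply Finset.sum_nonneg
  intro i _
  set e : E6 := EuclideanSpace.single i 1 with he
  set line : ℝ → E6 := fun t => x₀ + t • e with hline
  have hline0 : line 0 = x₀ := by simp [hline]
  have hlinecont : Continuous line := by continuity
  have hlinederiv : ∀ t : ℝ, HasDerivAt line e t := by
    intro t
    have h1 : HasDerivAt (fun t : ℝ => t • e) ((1:ℝ) • e) t := (hasDerivAt_id t).smul_const e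
    simpa [hline] using h1.const_add x₀
  have hnear : ∀ᶠ t in 𝓝 (0:ℝ), line t ∈ s := by
    have : line ⁻¹' s ∈ 𝓝 (0:ℝ) :=
      hlinecont.continuousAt.preimage_mem_nhds (by rw [hline0]; exact hso.mem_nhds hx₀)
    filter_upwards [this] with t ht using ht
  set g : ℝ → ℝ := fun t => w (line t) with hg
  have hlocmin : IsLocalMin g 0 := by
    filter_upwards [hnear] with t ht
    simpa [hg, hline0] using hmin _ ht
  have hgdiff : ∀ᶠ t in 𝓝 (0:ℝ), DifferentiableAt ℝ g t := by
    filter_upwards [hnear] with t ht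
    exact (hwd _ ht).comp t (hlinederiv t).differentiableAt
  set F : E6 → ℝ := fun y => fderiv ℝ w y e with hF
  have hFd : DifferentiableAt ℝ F x₀ := by
    have h1 : ContDiffAt ℝ 1 (fderiv ℝ w) x₀ :=
      (hw.contDiffAt (hso.mem_nhds hx₀)).fderiv_right (le_refl _)
    exact ((ContinuousLinearMap.apply ℝ ℝ e).differentiable.differentiableAt).comp x₀
      (h1.differentiableAt one_ne_zero)
  have hderivg : deriv g =ᶠ[𝓝 (0:ℝ)] fun t => F (line t) := by
    filter_upwards [hnear] with t ht
    exact ((hwd _ ht).hasFDerivAt.comp_hasDerivAt t (hlinederiv t)).deriv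
  have hkey : HasDerivAt (fun t => F (line t)) (fderiv ℝ F x₀ e) 0 := by
    have hFd' : HasFDerivAt F (fderiv ℝ F x₀) (line 0) := by rw [hline0]; exact hFd.hasFDerivAt
    exact hFd'.comp_hasDerivAt 0 (hlinederiv 0)
  have h2 : HasDerivAt (deriv g) (fderiv ℝ F x₀ e) 0 :=
    hkey.congr_of_eventuallyEq hderivg
  exact secderiv_nonneg hlocmin hgdiff h2

open RealInnerProductSpace in
lemma lap_add_sq {u : E6 → ℝ} {x : E6} (hu : ContDiffAt ℝ 2 u x) (c b : ℝ) :
    lap (fun y => u y + (c * ‖y‖ ^ 2 + b)) x = lap u x + 12 * c := by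
  obtain ⟨s, hs_nhds, hs⟩ := hu.contDiffOn (le_refl 2) (by norm_num)
  obtain ⟨t, hts, htopen, hxt⟩ := _root_.mem_nhds_iff.mp hs_nhds
  have hst : ContDiffOn ℝ 2 u t := hs.mono hts
  have hdu : ∀ y ∈ t, DifferentiableAt ℝ u y := fun y hy =>
    ((hst.differentiableOn (by norm_num)) y hy).differentiableAt (htopen.mem_nhds hy)
  have hnsq : ∀ y : E6, DifferentiableAt ℝ (fun z : E6 => c * ‖z‖ ^ 2 + b) y := by
    intro y
    have : DifferentiableAt ℝ (fun z : E6 => ⟪z, z⟫) y :=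
      (differentiableAt_fun_id.inner ℝ differentiableAt_fun_id)
    have h2 : DifferentiableAt ℝ (fun z : E6 => ‖z‖ ^ 2) y := by
      apply this.congr_of_eventuallyEq
      filter_upwards with z using (real_inner_self_eq_norm_sq z).symm
    exact (h2.const_mul c).add_const b
  have key : ∀ i : Fin 6,
      fderiv ℝ (fun y => fderiv ℝ (fun z => u z + (c * ‖z‖ ^ 2 + b)) y
          (EuclideanSpace.single i 1)) x (EuclideanSpace.single i 1)
        = fderiv ℝ (fun y => fderiv ℝ u y (EuclideanSpace.single i 1)) x
          (EuclideanSpace.single i 1) + 2 * c := by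
    intro i
    set e : E6 := EuclideanSpace.single i 1 with he
    have hee : ⟪e, e⟫ = 1 := by
      rw [real_inner_self_eq_norm_sq, EuclideanSpace.norm_single]
      norm_num
    -- eventual equality of the first-derivative functions
    have hev : (fun y => fderiv ℝ (fun z => u z + (c * ‖z‖ ^ 2 + b)) y e)
        =ᶠ[𝓝 x] (fun y => fderiv ℝ u y e + (2 * c) * ⟪y, e⟫) := by
      filter_upwards [htopen.mem_nhds hxt] with y hy
      have h1 : fderiv ℝ (fun z => u z + (c * ‖z‖ ^ 2 + b)) y
          = fderiv ℝ u y + fderiv ℝ (fun z : E6 => c * ‖z‖ ^ 2 + b) y :=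
        fderiv_add (hdu y hy) (hnsq y)
      have h2 : fderiv ℝ (fun z : E6 => c * ‖z‖ ^ 2 + b) y e = (2 * c) * ⟪y, e⟫ := by
        have hcong : (fun z : E6 => c * ‖z‖ ^ 2 + b) = (fun z : E6 => c * ⟪z, z⟫ + b) := by
          funext z; rw [real_inner_self_eq_norm_sq]
        rw [hcong]
        have hinner : DifferentiableAt ℝ (fun z : E6 => ⟪z, z⟫) y :=
          differentiableAt_fun_id.inner ℝ differentiableAt_fun_id
        rw [fderiv_add_const, fderiv_const_mul hinner]
        have := fderiv_inner_apply (𝕜 := ℝ) (differentiableAt_fun_id (x := y))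
          (differentiableAt_fun_id (x := y)) e
        simp only [fderiv_id'] at this
        simp only [ContinuousLinearMap.coe_smul', Pi.smul_apply, smul_eq_mul]
        rw [this]
        simp only [ContinuousLinearMap.coe_id', id_eq]
        rw [real_inner_comm e y]; ring
      rw [h1]; simp only [ContinuousLinearMap.add_apply, h2]
    rw [hev.fderiv_eq]
    -- differentiate the RHS
    have hG : DifferentiableAt ℝ (fun y => fderiv ℝ u y e) x := by
      have h1 : ContDiffAt ℝ 1 (fderiv ℝ u) x := hu.fderiv_right (le_refl _)
      exact ((ContinuousLinearMap.apply ℝ ℝ e).differentiable.differentiableAt).comp x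
        (h1.differentiableAt one_ne_zero)
    have hL : DifferentiableAt ℝ (fun y : E6 => (2 * c) * ⟪y, e⟫) x :=
      ((differentiableAt_fun_id.inner ℝ (differentiableAt_const e))).const_mul _
    rw [fderiv_fun_add hG hL]
    have hLval : fderiv ℝ (fun y : E6 => (2 * c) * ⟪y, e⟫) x e = 2 * c := by
      have hinner : DifferentiableAt ℝ (fun y : E6 => ⟪y, e⟫) x :=
        differentiableAt_fun_id.inner ℝ (differentiableAt_const e)
      rw [fderiv_const_mul hinner]
      have := fderiv_inner_apply (𝕜 := ℝ) (differentiableAt_fun_id (x := x))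
        (differentiableAt_const (x := x) e) e
      simp only [ContinuousLinearMap.coe_smul', Pi.smul_apply, smul_eq_mul]
      rw [this]
      simp [hee, he, EuclideanSpace.norm_single]
    simp only [ContinuousLinearMap.add_apply]
    rw [hLval]
  unfold lap
  rw [Finset.sum_congr rfl (fun i _ => key i)]
  rw [Finset.sum_add_distrib]
  simp
  ring


lemma maxp {s : Set E6} (hso : IsOpen s) (hsb : IsBounded s) {w : E6 → ℝ}
    (hw2 : ContDiffOn ℝ 2 w s) (hwc : ContinuousOn w (closure s))
    (hlapz : ∀ x ∈ s, lap w x ≤ 0) (hbd : ∀ x ∈ frontier s, 0 ≤ w x)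
    {x : E6} (hx : x ∈ closure s) : 0 ≤ w x := by
  obtain ⟨r, hr⟩ := hsb.subset_closedBall 0
  set M : ℝ := max r 0 with hM
  have hMnn : 0 ≤ M := le_max_right _ _
  have hsubM : closure s ⊆ closedBall 0 M := by
    have : s ⊆ closedBall 0 M := hr.trans (closedBall_subset_closedBall (le_max_left _ _))
    exact closure_minimal this isClosed_closedBall
  have key : ∀ δ > (0:ℝ), -(δ * M ^ 2) ≤ w x := by
    intro δ hδ
    set wδ : E6 → ℝ := fun y => w y + ((-δ) * ‖y‖ ^ 2 + 0) with hwδ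
    have hwδc : ContinuousOn wδ (closure s) := by
      apply hwc.add
      exact ((continuous_const.mul (continuous_norm.pow 2)).add continuous_const).continuousOn
    have hcomp : IsCompact (closure s) := hsb.isCompact_closure
    obtain ⟨x₀, hx₀mem, hx₀min⟩ := hcomp.exists_isMinOn ⟨x, hx⟩ hwδc
    have hx₀front : x₀ ∈ frontier s := by
      by_contra hns
      have hx₀s : x₀ ∈ s := by
        rw [hso.frontier_eq] at hns
        exact not_not.mp (fun h => hns ⟨hx₀mem, h⟩)
      -- interior minimum: contradiction with strict subharmonicity
      have hwδ2 : ContDiffOn ℝ 2 wδ s := by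
        apply hw2.add
        exact ((contDiff_const.mul (contDiff_norm_sq ℝ)).add contDiff_const).contDiffOn
      have hmin' : ∀ y ∈ s, wδ x₀ ≤ wδ y := fun y hy =>
        hx₀min (subset_closure hy)
      have h1 : 0 ≤ lap wδ x₀ := lap_nonneg_at_min hso hx₀s hwδ2 hmin'
      have h2 : lap wδ x₀ = lap w x₀ + 12 * (-δ) :=
        lap_add_sq (hw2.contDiffAt (hso.mem_nhds hx₀s)) (-δ) 0
      have h3 := hlapz x₀ hx₀s
      rw [h2] at h1
      linarith
    have h4 : 0 ≤ w x₀ := hbd x₀ hx₀front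
    have h5 : wδ x₀ ≤ wδ x := hx₀min hx
    have h6 : ‖x₀‖ ≤ M := by
      have := hsubM hx₀mem
      rwa [mem_closedBall, dist_zero_right] at this
    have h7 : ‖x‖ ≤ M := by
      have := hsubM hx
      rwa [mem_closedBall, dist_zero_right] at this
    have h8 : ‖x₀‖ ^ 2 ≤ M ^ 2 := by nlinarith [norm_nonneg x₀]
    simp only [hwδ] at h5
    nlinarith [norm_nonneg x, sq_nonneg ‖x‖]
  by_contra hneg
  push_neg at hneg
  have hδ : (0:ℝ) < (-w x) / (M ^ 2 + 1) := by
    apply div_pos (by linarith) (by positivity)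
  have hprod : (-w x) / (M ^ 2 + 1) * (M ^ 2 + 1) = -w x := by field_simp
  nlinarith [key _ hδ, hδ]

set_option maxHeartbeats 1000000 in
/-- Dimension `N = 6`: with `u_ε(x) = (ε/(ε²+|x|²))²` the Aubin–Talenti bubble
and `φ_ε = φ u_ε` (cutoff `φ` equal to `1` on `B_R(0)`, supported in
`B_{2R}(0) ⊆ Ω ⊆ ℝ⁶`), there is `C > 0` independent of `ε` with
`∫_Ω φ_ε (-Δ)⁻¹ φ_ε > C ε⁴` for small `ε > 0`. -/
theorem stmt6
    (Ω : Set (EuclideanSpace ℝ (Fin 6))) (hΩo : IsOpen Ω) (hΩb : IsBounded Ω)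
    (R : ℝ) (hR : 0 < R)
    (hRΩ : closedBall (0 : EuclideanSpace ℝ (Fin 6)) (2 * R) ⊆ Ω)
    (φ : EuclideanSpace ℝ (Fin 6) → ℝ) (hφsm : ContDiff ℝ (⊤ : ℕ∞) φ)
    (hφ1 : ∀ x ∈ ball (0 : EuclideanSpace ℝ (Fin 6)) R, φ x = 1)
    (hφsupp : ∀ x ∉ ball (0 : EuclideanSpace ℝ (Fin 6)) (2 * R), φ x = 0)
    (hφrange : ∀ x, 0 ≤ φ x ∧ φ x ≤ 1)
    (v : ℝ → EuclideanSpace ℝ (Fin 6) → ℝ)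
    (hvsm : ∀ ε > (0 : ℝ), ContDiffOn ℝ 2 (v ε) Ω)
    (hvcont : ∀ ε > (0 : ℝ), ContinuousOn (v ε) (closure Ω))
    (hveq : ∀ ε > (0 : ℝ), ∀ x ∈ Ω,
      -lap (v ε) x = φ x * (ε / (ε ^ 2 + ‖x‖ ^ 2)) ^ 2)
    (hvbd : ∀ ε > (0 : ℝ), ∀ x ∈ frontier Ω, v ε x = 0) :
    ∃ C > (0 : ℝ), ∃ ε₀ > (0 : ℝ), ∀ ε, 0 < ε → ε < ε₀ →
      C * ε ^ 4 <
        ∫ x in Ω, (φ x * (ε / (ε ^ 2 + ‖x‖ ^ 2)) ^ 2) * v ε x := by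
  set vol : ℝ := (volume (ball (0 : E6) (R / 2))).toReal with hvol
  have hvolpos : 0 < vol := by
    apply ENNReal.toReal_pos
    · exact (measure_ball_pos volume 0 (by positivity)).ne'
    · exact measure_ball_lt_top.ne
  refine ⟨vol / (512 * R ^ 6), by positivity, R, hR, ?_⟩
  intro ε hε hεR
  -- basic inclusions
  have hball2 : ball (0 : E6) R ⊆ Ω := fun y hy =>
    hRΩ (closedBall_subset_closedBall (by linarith) (ball_subset_closedBall hy))
  have hcball : closedBall (0 : E6) R ⊆ Ω := fun y hy =>
    hRΩ (closedBall_subset_closedBall (by linarith) hy)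
  have hv2 := hvsm ε hε
  have hvc := hvcont ε hε
  -- Step 1: v ε ≥ 0 on closure Ω
  have hpos : ∀ x ∈ closure Ω, 0 ≤ v ε x := by
    intro x hx
    refine maxp hΩo hΩb hv2 hvc ?_ ?_ hx
    · intro y hy
      have h := hveq ε hε y hy
      have h1 : 0 ≤ φ y * (ε / (ε ^ 2 + ‖y‖ ^ 2)) ^ 2 :=
        mul_nonneg (hφrange y).1 (sq_nonneg _)
      linarith
    · intro y hy
      rw [hvbd ε hε y hy]
  -- the key pointwise lower bound for u_ε on ball R
  have hub : ∀ x : E6, ‖x‖ < R → ε ^ 2 / (4 * R ^ 4) ≤ (ε / (ε ^ 2 + ‖x‖ ^ 2)) ^ 2 := by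
    intro x hx
    have hD : 0 < ε ^ 2 + ‖x‖ ^ 2 := by positivity
    have hD2 : ε ^ 2 + ‖x‖ ^ 2 ≤ 2 * R ^ 2 := by
      nlinarith [norm_nonneg x]
    rw [div_pow]
    rw [div_le_div_iff₀ (by positivity) (by positivity)]
    have h4 : (ε ^ 2 + ‖x‖ ^ 2) ^ 2 ≤ 4 * R ^ 4 := by nlinarith
    nlinarith [sq_nonneg ε]
  -- Step 2: comparison on ball R
  set a : ℝ := ε ^ 2 / (48 * R ^ 4) with ha
  have hapos : 0 < a := by positivity
  have hcomp : ∀ x ∈ closedBall (0 : E6) R, a * (R ^ 2 - ‖x‖ ^ 2) ≤ v ε x := by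
    intro x hx
    have hkey : 0 ≤ v ε x + (a * ‖x‖ ^ 2 + -(a * R ^ 2)) := by
      refine maxp (s := ball (0 : E6) R) isOpen_ball isBounded_ball
        (w := fun y => v ε y + (a * ‖y‖ ^ 2 + -(a * R ^ 2))) ?_ ?_ ?_ ?_
        (x := x) ?_
      · apply (hv2.mono hball2).add
        exact ((contDiff_const.mul (contDiff_norm_sq ℝ)).add contDiff_const).contDiffOn
      · rw [closure_ball 0 hR.ne']
        apply ContinuousOn.add (hvc.mono ((hcball.trans subset_closure)))
        exact ((continuous_const.mul (continuous_norm.pow 2)).add continuous_const).continuousOn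
      · intro y hy
        have hyΩ : y ∈ Ω := hball2 hy
        have hlapval : lap (fun z => v ε z + (a * ‖z‖ ^ 2 + -(a * R ^ 2))) y
            = lap (v ε) y + 12 * a :=
          lap_add_sq (hv2.contDiffAt (hΩo.mem_nhds hyΩ)) a _
        rw [hlapval]
        have heq := hveq ε hε y hyΩ
        rw [hφ1 y hy, one_mul] at heq
        have hyR : ‖y‖ < R := by
          rw [mem_ball, dist_zero_right] at hy; exact hy
        have h12a : 12 * a ≤ (ε / (ε ^ 2 + ‖y‖ ^ 2)) ^ 2 := by
          have := hub y hyR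
          rw [ha]
          calc 12 * (ε ^ 2 / (48 * R ^ 4)) = ε ^ 2 / (4 * R ^ 4) := by ring
          _ ≤ _ := this
        linarith
      · intro y hy
        rw [frontier_ball 0 hR.ne'] at hy
        have hyR : ‖y‖ = R := by
          rw [mem_sphere, dist_zero_right] at hy; exact hy
        have hyc : y ∈ closure Ω := subset_closure (hcball (by
          rw [mem_closedBall, dist_zero_right, hyR]))
        have := hpos y hyc
        rw [hyR]; ring_nf; linarith
      · rw [closure_ball 0 hR.ne']; exact hx
    nlinarith [hkey]
  -- Step 3: integrand lower bound on ball (R/2)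
  set f : E6 → ℝ := fun x => (φ x * (ε / (ε ^ 2 + ‖x‖ ^ 2)) ^ 2) * v ε x with hf
  have hflow : ∀ x ∈ ball (0 : E6) (R / 2), ε ^ 4 / (256 * R ^ 6) ≤ f x := by
    intro x hx
    have hxR2 : ‖x‖ < R / 2 := by rw [mem_ball, dist_zero_right] at hx; exact hx
    have hxR : ‖x‖ < R := by linarith
    have hφx : φ x = 1 := hφ1 x (by rw [mem_ball, dist_zero_right]; exact hxR)
    have h1 : ε ^ 2 / (4 * R ^ 4) ≤ (ε / (ε ^ 2 + ‖x‖ ^ 2)) ^ 2 := hub x hxR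
    have h2 : ε ^ 2 / (64 * R ^ 2) ≤ v ε x := by
      have := hcomp x (by rw [mem_closedBall, dist_zero_right]; exact hxR.le)
      have hn : ε ^ 2 / (64 * R ^ 2) ≤ a * (R ^ 2 - ‖x‖ ^ 2) := by
        rw [ha, div_le_iff₀ (by positivity : (0:ℝ) < 64 * R ^ 2)]
        rw [div_mul_eq_mul_div, div_mul_eq_mul_div, le_div_iff₀ (by positivity : (0:ℝ) < 48 * R ^ 4)]
        have hx2 : ‖x‖ ^ 2 ≤ R ^ 2 / 4 := by nlinarith [norm_nonneg x]
        nlinarith [mul_le_mul_of_nonneg_left hx2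
          (by positivity : (0:ℝ) ≤ ε ^ 2 * (64 * R ^ 2))]
      linarith
    rw [hf]
    simp only [hφx, one_mul]
    have hv0 : 0 ≤ v ε x := hpos x (subset_closure (hcball (by
      rw [mem_closedBall, dist_zero_right]; exact hxR.le)))
    calc ε ^ 4 / (256 * R ^ 6) = (ε ^ 2 / (4 * R ^ 4)) * (ε ^ 2 / (64 * R ^ 2)) := by
          field_simp; ring
    _ ≤ (ε / (ε ^ 2 + ‖x‖ ^ 2)) ^ 2 * v ε x := by
          apply mul_le_mul h1 h2 (by positivity) (sq_nonneg _)
  -- integrability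
  have hfc : ContinuousOn f (closure Ω) := by
    apply ContinuousOn.mul _ hvc
    apply Continuous.continuousOn
    apply Continuous.mul hφsm.continuous
    apply Continuous.pow
    apply continuous_const.div (by continuity)
    intro x; positivity
  have hint : IntegrableOn f (closure Ω) :=
    hfc.integrableOn_compact hΩb.isCompact_closure
  have hintΩ : IntegrableOn f Ω := hint.mono_set subset_closure
  have hfnn : 0 ≤ᵐ[volume.restrict Ω] f := by
    rw [EventuallyLE, ae_restrict_iff' hΩo.measurableSet]
    apply ae_of_all
    intro x hx
    exact mul_nonneg (mul_nonneg (hφrange x).1 (sq_nonneg _))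
      (hpos x (subset_closure hx))
  have hsub : ball (0 : E6) (R / 2) ⊆ Ω := fun y hy =>
    hball2 (ball_subset_ball (by linarith) hy)
  have step1 : ε ^ 4 / (256 * R ^ 6) * vol ≤ ∫ x in ball (0 : E6) (R / 2), f x := by
    apply setIntegral_ge_of_const_le_real measurableSet_ball measure_ball_lt_top.ne hflow
    exact hintΩ.mono_set hsub
  have step2 : (∫ x in ball (0 : E6) (R / 2), f x) ≤ ∫ x in Ω, f x :=
    setIntegral_mono_set hintΩ hfnn (HasSubset.Subset.eventuallyLE hsub)
  have final : vol / (512 * R ^ 6) * ε ^ 4 < ε ^ 4 / (256 * R ^ 6) * vol := by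
    rw [div_mul_eq_mul_div, div_mul_eq_mul_div, div_lt_div_iff₀ (by positivity) (by positivity)]
    have hε4 : 0 < ε ^ 4 := by positivity
    nlinarith [mul_pos (mul_pos hvolpos hε4) (pow_pos hR 6)]
  calc vol / (512 * R ^ 6) * ε ^ 4 < ε ^ 4 / (256 * R ^ 6) * vol := final
  _ ≤ ∫ x in ball (0 : E6) (R / 2), f x := step1
  _ ≤ ∫ x in Ω, f x := step2
end
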